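/- arXiv:1508.07695 — 3 statements merged into one kernel-verified Lean document; each statement's English description precedes it below -/
import Mathlib

section
/- For every point (x,y,z) ∈ ℂ³ lying on the zero locus of F (i.e. F(x,y,z) = 0), the gradient of F at (x,y,z) is nonzero: at least one of the partial derivatives ∂F/∂x, ∂F/∂y, ∂F/∂z does not vanish at (x,y,z). Consequently the affine surface S_{s,[m][p]} ⊂ ℂ³ is smooth. -/
/-!
Write `F = A(x) z - B(x, y) - C(x)`. Since `∂F/∂z = A(x)`, only points with `A(x) = 0`, i.e.
`x = rₖ`, need attention. There `A` and `C` vanish and `B(rₖ, y) = ∏_{j≠k} (rₖ - rⱼ) · y^{pₖ}`,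
so `F = 0` forces `y = 0`. As `mₖ ≥ 2`, `rₖ` is a critical point of `A`, whereas
`C'(rₖ) = ∏_{j≠k} (rₖ - rⱼ) ≠ 0` because the `rⱼ` are distinct; hence `∂F/∂x = -C'(rₖ) ≠ 0`.
-/

open Finset

section NodeProducts

variable {ι R : Type*} [Fintype ι] [DecidableEq ι] [CommRing R]

theorem sum_prod_erase_sub_mul_at_node (a g : ι → R) (k : ι) :
    ∑ i, (∏ j ∈ univ.erase i, (a k - a j)) * g i = (∏ j ∈ univ.erase k, (a k - a j)) * g k := by
  refine sum_eq_single_of_mem k (mem_univ k) fun i _ hik => ?_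
  rw [prod_eq_zero (mem_erase.mpr ⟨hik.symm, mem_univ k⟩) (sub_self _), zero_mul]

theorem prod_erase_sub_ne_zero [IsDomain R] {a : ι → R} (ha : Function.Injective a) (k : ι) :
    ∏ j ∈ univ.erase k, (a k - a j) ≠ 0 :=
  prod_ne_zero_iff.mpr fun _ hj => sub_ne_zero.mpr (ha.ne (mem_erase.mp hj).1.symm)

end NodeProducts

section DerivAtNode

variable {ι 𝕜 : Type*} [Fintype ι] [DecidableEq ι] [NontriviallyNormedField 𝕜]

theorem hasDerivAt_prod_sub_at_node (a : ι → 𝕜) (k : ι) :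
    HasDerivAt (fun t => ∏ i, (t - a i)) (∏ j ∈ univ.erase k, (a k - a j)) (a k) := by
  have h := HasDerivAt.fun_finsetProd (u := univ) fun i _ => (hasDerivAt_id (a k)).sub_const (a i)
  refine h.congr_deriv ?_
  simpa using sum_prod_erase_sub_mul_at_node a 1 k

theorem hasDerivAt_prod_sub_pow_at_node (a : ι → 𝕜) (m : ι → ℕ) {k : ι} (hk : 2 ≤ m k) :
    HasDerivAt (fun t => ∏ i, (t - a i) ^ m i) 0 (a k) := by
  have h := HasDerivAt.fun_finsetProd (u := univ)
    fun i _ => ((hasDerivAt_id (a k)).sub_const (a i)).fun_pow (m i)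
  refine h.congr_deriv (sum_eq_zero fun i _ => ?_)
  rcases eq_or_ne i k with rfl | hik
  · simp [zero_pow (show m i - 1 ≠ 0 by omega)]
  · rw [prod_eq_zero (mem_erase.mpr ⟨hik.symm, mem_univ k⟩) (by simp; omega), zero_smul]

end DerivAtNode

theorem fake_plane_negKodaira_hypersurface_smooth_general
    (s : ℕ)
    (m : Fin s → ℕ) (hm : ∀ i, 2 ≤ m i)
    (p : Fin s → ℕ) (hp3 : ∀ i, 3 ≤ p i)
    (r : Fin s → ℝ) (hr : Function.Injective r)
    (F : ℂ → ℂ → ℂ → ℂ)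
    (hF : ∀ x y z : ℂ, F x y z =
      (∏ i, (x - (r i : ℂ)) ^ m i) * z
        - (∑ i, (∏ j ∈ Finset.univ.erase i, (x - (r j : ℂ))) * y ^ p i)
        - ∏ i, (x - (r i : ℂ))) :
    ∀ x y z : ℂ, F x y z = 0 →
      deriv (fun t => F t y z) x ≠ 0 ∨ deriv (fun t => F x t z) y ≠ 0 ∨
        deriv (fun t => F x y t) z ≠ 0 := by
  intro x y z hFxyz
  by_cases hA : ∏ i, (x - (r i : ℂ)) ^ m i = 0
  · left
    have hp : ∀ i, p i ≠ 0 := fun i => by have := hp3 i; omega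
    obtain ⟨k, -, hk⟩ := prod_eq_zero_iff.mp hA
    obtain rfl : x = r k := sub_eq_zero.mp (pow_eq_zero_iff (by have := hm k; omega) |>.mp hk)
    have hnode : ∏ j ∈ univ.erase k, ((r k : ℂ) - r j) ≠ 0 :=
      prod_erase_sub_ne_zero (Complex.ofReal_injective.comp hr) k
    obtain rfl : y = 0 := by
      rw [hF, hA, sum_prod_erase_sub_mul_at_node (fun i => (r i : ℂ)),
        prod_eq_zero (mem_univ k) (sub_self _)] at hFxyz
      simpa [hp, hnode] using hFxyz
    have hFx : (fun t => F t 0 z) =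
        fun t => (∏ i, (t - (r i : ℂ)) ^ m i) * z - ∏ i, (t - (r i : ℂ)) :=
      funext fun t => by simp [hF, hp]
    have hd := ((hasDerivAt_prod_sub_pow_at_node (fun i => (r i : ℂ)) m (hm k)).mul_const
      z).fun_sub (hasDerivAt_prod_sub_at_node (fun i => (r i : ℂ)) k)
    rw [hFx, hd.deriv]
    simpa using hnode
  · right; right
    simpa [hF] using hA

/-- For every point on the zero locus of the polynomial
`F(x,y,z) = (∏ (x−rᵢ)^{mᵢ})·z − Σᵢ (∏_{j≠i}(x−rⱼ))·y^{pᵢ} − ∏ (x−rᵢ)`,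
at least one of the three partial derivatives of `F` does not vanish;
consequently the affine surface `S_{s,[m][p]} ⊂ ℂ³` is smooth. -/
theorem fake_plane_negKodaira_hypersurface_smooth
    (s : ℕ) (hs : 1 ≤ s)
    (m : Fin s → ℕ) (hm : ∀ i, 2 ≤ m i)
    (p : Fin s → ℕ) (hpodd : ∀ i, Odd (p i)) (hp3 : ∀ i, 3 ≤ p i)
    (r : Fin s → ℝ) (hr : Function.Injective r)
    (F : ℂ → ℂ → ℂ → ℂ)
    (hF : ∀ x y z : ℂ, F x y z =
      (∏ i, (x - (r i : ℂ)) ^ m i) * z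
        - (∑ i, (∏ j ∈ Finset.univ.erase i, (x - (r j : ℂ))) * y ^ p i)
        - ∏ i, (x - (r i : ℂ))) :
    ∀ x y z : ℂ, F x y z = 0 →
      deriv (fun t => F t y z) x ≠ 0 ∨ deriv (fun t => F x t z) y ≠ 0 ∨
        deriv (fun t => F x y t) z ≠ 0 :=
  fake_plane_negKodaira_hypersurface_smooth_general s m hm p hp3 r hr F hF
end

section
/- For every x₀ ∈ ℂ with ∏_{i=1}^s (x₀−r_i) ≠ 0, the fiber {(y,z) ∈ ℂ² : F(x₀,y,z) = 0} is exactly the graph {(y, (Σ_{i=1}^s (∏_{j≠i}(x₀−r_j))·y^{p_i} + ∏_{i=1}^s (x₀−r_i)) / ∏_{i=1}^s (x₀−r_i)^{m_i}) : y ∈ ℂ}; and for every index i, the fiber {(y,z) ∈ ℂ² : F(r_i,y,z) = 0} equals the line {(0,z) : z ∈ ℂ}. In particular, every set-theoretic fiber of the projection pr_x : S_{s,[m][p]} → ℂ is in bijection with ℂ. -/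
/-!
At a point `x₀` off the nodes `rᵢ` the coefficient `∏ (x₀ - rᵢ) ^ mᵢ` of `z` is a unit, so the
equation can be solved for `z` and the fiber is a graph over the `y`-line. At a node `rᵢ` every
term vanishes except `-(∏_{j ≠ i} (rᵢ - rⱼ)) · y ^ pᵢ`, whose coefficient is nonzero because the
nodes are distinct, so the fiber is the `z`-line `{y = 0}`.
-/

open Finset

def Set.graphEquiv {α β : Type*} (g : α → β) : α ≃ Set.range fun x => (x, g x) where
  toFun x := ⟨(x, g x), x, rfl⟩
  invFun q := q.1.1
  left_inv _ := rfl
  right_inv := fun ⟨_, _, h⟩ => by subst h; rfl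

def Set.fstEqZeroEquiv (K : Type*) [Zero K] : K ≃ {yz : K × K | yz.1 = 0} where
  toFun z := ⟨(0, z), rfl⟩
  invFun yz := yz.1.2
  left_inv _ := rfl
  right_inv := fun ⟨(y, z), (hy : y = 0)⟩ => by subst hy; rfl

theorem Finset.sum_prod_erase_sub_mul_eq_single {R ι : Type*} [CommRing R] [Fintype ι]
    [DecidableEq ι] (a : ι → R) (f : ι → R) (i : ι) :
    ∑ k, (∏ j ∈ univ.erase k, (a i - a j)) * f k = (∏ j ∈ univ.erase i, (a i - a j)) * f i := by
  refine sum_eq_single i (fun k _ hk => ?_) (fun h => absurd (mem_univ i) h)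
  rw [prod_eq_zero (mem_erase.mpr ⟨Ne.symm hk, mem_univ i⟩) (sub_self _), zero_mul]

namespace FakePlane

variable {K ι : Type*} [Field K] [Fintype ι] [DecidableEq ι]

def eqn (a : ι → K) (m p : ι → ℕ) (x y z : K) : K :=
  (∏ i, (x - a i) ^ m i) * z - (∑ i, (∏ j ∈ univ.erase i, (x - a j)) * y ^ p i)
    - ∏ i, (x - a i)

theorem setOf_eqn_eq_range_of_prod_ne_zero (a : ι → K) (m p : ι → ℕ) {x : K}
    (hx : ∏ i, (x - a i) ≠ 0) :
    {yz : K × K | eqn a m p x yz.1 yz.2 = 0} =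
      Set.range fun y : K =>
        (y, ((∑ i, (∏ j ∈ univ.erase i, (x - a j)) * y ^ p i) + ∏ i, (x - a i))
          / ∏ i, (x - a i) ^ m i) := by
  have hlead : ∏ i, (x - a i) ^ m i ≠ 0 :=
    prod_ne_zero_iff.mpr fun i hi => pow_ne_zero _ (prod_ne_zero_iff.mp hx i hi)
  ext ⟨y, z⟩
  simp only [Set.mem_ofPred_eq, Set.mem_range, Prod.mk.injEq, eqn, exists_eq_left,
    eq_div_iff hlead, eq_comm (b := z)]
  constructor <;> intro h <;> linear_combination h

theorem prod_erase_sub_ne_zero {a : ι → K} (ha : Function.Injective a) (i : ι) :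
    ∏ j ∈ univ.erase i, (a i - a j) ≠ 0 :=
  prod_ne_zero_iff.mpr fun _ hj => sub_ne_zero.mpr (ha.ne (mem_erase.mp hj).1.symm)

theorem eqn_node (a : ι → K) {m : ι → ℕ} (p : ι → ℕ) {i : ι} (hm : m i ≠ 0) (y z : K) :
    eqn a m p (a i) y z = -((∏ j ∈ univ.erase i, (a i - a j)) * y ^ p i) := by
  have hlead : ∏ j, (a i - a j) ^ m j = 0 :=
    prod_eq_zero (mem_univ i) (by rw [sub_self, zero_pow hm])
  have hprod : ∏ j, (a i - a j) = 0 := prod_eq_zero (mem_univ i) (sub_self _)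
  rw [eqn, hlead, hprod, Finset.sum_prod_erase_sub_mul_eq_single]
  ring

theorem setOf_eqn_node {a : ι → K} (ha : Function.Injective a) {m p : ι → ℕ} {i : ι}
    (hm : m i ≠ 0) (hp : p i ≠ 0) :
    {yz : K × K | eqn a m p (a i) yz.1 yz.2 = 0} = {yz : K × K | yz.1 = 0} := by
  ext ⟨y, z⟩
  simp [eqn_node a p hm, prod_erase_sub_ne_zero ha i, hp]

theorem nonempty_equiv_fiber {a : ι → K} (ha : Function.Injective a) {m p : ι → ℕ}
    (hm : ∀ i, m i ≠ 0) (hp : ∀ i, p i ≠ 0) (x : K) :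
    Nonempty (K ≃ {yz : K × K // eqn a m p x yz.1 yz.2 = 0}) := by
  by_cases hx : ∏ i, (x - a i) = 0
  · obtain ⟨i, -, hi⟩ := prod_eq_zero_iff.mp hx
    obtain rfl : x = a i := sub_eq_zero.mp hi
    exact ⟨(Set.fstEqZeroEquiv K).trans (Equiv.setCongr (setOf_eqn_node ha (hm i) (hp i)).symm)⟩
  · exact ⟨(Set.graphEquiv _).trans
      (Equiv.setCongr (setOf_eqn_eq_range_of_prod_ne_zero a m p hx).symm)⟩

end FakePlane

open FakePlane in
theorem fake_plane_negKodaira_hypersurface_fibers_general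
    (s : ℕ)
    (m : Fin s → ℕ) (hm : ∀ i, 2 ≤ m i)
    (p : Fin s → ℕ) (hp3 : ∀ i, 3 ≤ p i)
    (r : Fin s → ℝ) (hr : Function.Injective r)
    (F : ℂ → ℂ → ℂ → ℂ)
    (hF : ∀ x y z : ℂ, F x y z =
      (∏ i, (x - (r i : ℂ)) ^ m i) * z
        - (∑ i, (∏ j ∈ Finset.univ.erase i, (x - (r j : ℂ))) * y ^ p i)
        - ∏ i, (x - (r i : ℂ))) :
    (∀ x₀ : ℂ, (∏ i, (x₀ - (r i : ℂ))) ≠ 0 →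
      {yz : ℂ × ℂ | F x₀ yz.1 yz.2 = 0} =
        Set.range (fun y : ℂ =>
          (y, ((∑ i, (∏ j ∈ Finset.univ.erase i, (x₀ - (r j : ℂ))) * y ^ p i)
                + ∏ i, (x₀ - (r i : ℂ))) / ∏ i, (x₀ - (r i : ℂ)) ^ m i))) ∧
    (∀ i : Fin s,
      {yz : ℂ × ℂ | F ((r i : ℂ)) yz.1 yz.2 = 0} = {yz : ℂ × ℂ | yz.1 = 0}) ∧
    (∀ x₀ : ℂ, Nonempty (ℂ ≃ {yz : ℂ × ℂ // F x₀ yz.1 yz.2 = 0})) := by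
  obtain rfl : F = eqn (fun i => (r i : ℂ)) m p := funext₃ hF
  have ha : Function.Injective fun i => (r i : ℂ) := Complex.ofReal_injective.comp hr
  have hm' : ∀ i, m i ≠ 0 := fun i => by linarith [hm i]
  have hp' : ∀ i, p i ≠ 0 := fun i => by linarith [hp3 i]
  exact ⟨fun x₀ => setOf_eqn_eq_range_of_prod_ne_zero _ m p,
    fun i => setOf_eqn_node ha (hm' i) (hp' i), nonempty_equiv_fiber ha hm' hp'⟩

/-- Description of the set-theoretic fibers of the projection `pr_x : S_{s,[m][p]} → ℂ`:
over a point `x₀` which is not one of the `rᵢ` the fiber is the graph of an explicit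
rational function of `y`, over `rᵢ` it is the line `{y = 0}`; in particular every
fiber is in bijection with `ℂ`. -/
theorem fake_plane_negKodaira_hypersurface_fibers
    (s : ℕ) (hs : 1 ≤ s)
    (m : Fin s → ℕ) (hm : ∀ i, 2 ≤ m i)
    (p : Fin s → ℕ) (hpodd : ∀ i, Odd (p i)) (hp3 : ∀ i, 3 ≤ p i)
    (r : Fin s → ℝ) (hr : Function.Injective r)
    (F : ℂ → ℂ → ℂ → ℂ)
    (hF : ∀ x y z : ℂ, F x y z =
      (∏ i, (x - (r i : ℂ)) ^ m i) * z
        - (∑ i, (∏ j ∈ Finset.univ.erase i, (x - (r j : ℂ))) * y ^ p i)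
        - ∏ i, (x - (r i : ℂ))) :
    (∀ x₀ : ℂ, (∏ i, (x₀ - (r i : ℂ))) ≠ 0 →
      {yz : ℂ × ℂ | F x₀ yz.1 yz.2 = 0} =
        Set.range (fun y : ℂ =>
          (y, ((∑ i, (∏ j ∈ Finset.univ.erase i, (x₀ - (r j : ℂ))) * y ^ p i)
                + ∏ i, (x₀ - (r i : ℂ))) / ∏ i, (x₀ - (r i : ℂ)) ^ m i))) ∧
    (∀ i : Fin s,
      {yz : ℂ × ℂ | F ((r i : ℂ)) yz.1 yz.2 = 0} = {yz : ℂ × ℂ | yz.1 = 0}) ∧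
    (∀ x₀ : ℂ, Nonempty (ℂ ≃ {yz : ℂ × ℂ // F x₀ yz.1 yz.2 = 0})) :=
  fake_plane_negKodaira_hypersurface_fibers_general s m hm p hp3 r hr F hF
end

section
/- The map ℝ² → ℝ³ given by (x,z) ↦ (x, (x²z + x)^{1/3}, z) is a homeomorphism of ℝ² onto the set {(x,y,z) ∈ ℝ³ : x²z = y³ − x} equipped with the subspace topology. In particular the real locus of the cubic surface x²z = y³ − x is homeomorphic to ℝ². -/
/-- The map `(x,z) ↦ (x, (x²z + x)^{1/3}, z)` is a homeomorphism of `ℝ²` onto the real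
locus `{(x,y,z) ∈ ℝ³ : x²z = y³ − x}` of the cubic surface `x²z = y³ − x`, equipped with
the euclidean subspace topology.  Here `cbrt` denotes the real cube root. -/
theorem real_locus_cubic_homeo_R2
    (cbrt : ℝ → ℝ) (hcbrt : ∀ t : ℝ, (cbrt t) ^ 3 = t) :
    ∃ h : (ℝ × ℝ) ≃ₜ {v : ℝ × ℝ × ℝ // v.1 ^ 2 * v.2.2 = v.2.1 ^ 3 - v.1},
      ∀ xz : ℝ × ℝ,
        (h xz : ℝ × ℝ × ℝ) = (xz.1, cbrt (xz.1 ^ 2 * xz.2 + xz.1), xz.2) := by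
  have hodd : Odd 3 := by decide
  have hmono : StrictMono (fun y : ℝ => y ^ 3) := Odd.strictMono_pow hodd
  have hsurj : Function.Surjective (fun y : ℝ => y ^ 3) := fun t => ⟨cbrt t, hcbrt t⟩
  have hinj : Function.Injective (fun y : ℝ => y ^ 3) := hmono.injective
  have hcbrt' : ∀ y : ℝ, cbrt (y ^ 3) = y := fun y => hinj (hcbrt (y ^ 3))
  -- continuity of cbrt
  have hcont : Continuous cbrt := by
    let e := StrictMono.orderIsoOfSurjective _ hmono hsurj
    have heq : cbrt = e.symm := by
      funext t
      apply hinj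
      show cbrt t ^ 3 = (e.symm t : ℝ) ^ 3
      rw [hcbrt t]
      exact (e.apply_symm_apply t).symm
    rw [heq]
    exact e.toHomeomorph.symm.continuous
  refine ⟨⟨⟨fun xz => ⟨(xz.1, cbrt (xz.1 ^ 2 * xz.2 + xz.1), xz.2), by
      simp [hcbrt]⟩,
    fun v => (v.1.1, v.1.2.2),
    fun xz => by simp,
    fun v => by
      obtain ⟨⟨x, y, z⟩, hv⟩ := v
      simp only at hv ⊢
      ext
      · rfl
      · show cbrt (x ^ 2 * z + x) = y
        have : x ^ 2 * z + x = y ^ 3 := by linarith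
        rw [this, hcbrt']
      · rfl⟩,
    by
      apply Continuous.subtype_mk
      exact continuous_fst.prodMk ((hcont.comp (by fun_prop)).prodMk continuous_snd),
    by
      exact (continuous_subtype_val.fst).prodMk (continuous_subtype_val.snd.snd)⟩,
    fun xz => rfl⟩
end
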